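/- Integral representation of differences of regularized log-determinants via resolvent traces. Let d ≥ 1, let H₁, H₂ ∈ ℂ^{d×d} be Hermitian, and let η > 0. Then the function u ↦ Im Tr (H₁ − iu·I)^{-1} − Im Tr (H₂ − iu·I)^{-1} is absolutely integrable on [η, ∞), and log det(H₁² + η²·I) − log det(H₂² + η²·I) = −2 ∫_η^∞ [ Im Tr (H₁ − iu·I)^{-1} − Im Tr (H₂ − iu·I)^{-1} ] du, where Im Tr G := Im(Tr G) and the determinants are of positive definite matrices, so both logarithms are finite. -/

import Mathlib

open MeasureTheory ProbabilityTheory Matrix Polynomial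
open scoped ComplexOrder NNReal ENNReal

noncomputable section

/-- The Hermitization `[[0, B], [Bᴴ, 0]]` of an `N × N` complex matrix `B`. -/
def hermitize {N : ℕ} (B : Matrix (Fin N) (Fin N) ℂ) :
    Matrix (Fin N ⊕ Fin N) (Fin N ⊕ Fin N) ℂ :=
  Matrix.fromBlocks 0 B Bᴴ 0

/-- Normalized trace `⟨M⟩ = d⁻¹ Tr M`. -/
def ntrace {ι : Type} [Fintype ι] (M : Matrix ι ι ℂ) : ℂ :=
  M.trace / (Fintype.card ι : ℂ)

/-- `|B|² = Bᴴ B`. -/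
def absSq {N : ℕ} (B : Matrix (Fin N) (Fin N) ℂ) : Matrix (Fin N) (Fin N) ℂ :=
  Bᴴ * B

/-- The (matrix) imaginary part `Im M = (M - Mᴴ)/(2i)`. -/
def imPart {ι : Type} [Fintype ι] (M : Matrix ι ι ℂ) : Matrix ι ι ℂ :=
  (2 * Complex.I)⁻¹ • (M - Mᴴ)

/-- The `ℓ² → ℓ²` operator norm of a matrix. -/
def opNorm {ι : Type} [Fintype ι] [DecidableEq ι] (M : Matrix ι ι ℂ) : ℝ :=
  ‖LinearMap.toContinuousLinearMap (Matrix.toEuclideanLin M)‖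

/-- `M` is a solution of the matrix Dyson equation
`-M⁻¹ = -H_𝒜 + ẑ·I + ⟨M⟩·I` with positive definite imaginary part. -/
def IsMDESolution {N : ℕ} (𝒜 : Matrix (Fin N) (Fin N) ℂ) (zhat : ℂ)
    (M : Matrix (Fin N ⊕ Fin N) (Fin N ⊕ Fin N) ℂ) : Prop :=
  IsUnit M.det ∧ (imPart M).PosDef ∧
    M⁻¹ = hermitize 𝒜 - zhat • (1 : Matrix (Fin N ⊕ Fin N) (Fin N ⊕ Fin N) ℂ) - ntrace M • 1

/-- A choice of solution of the matrix Dyson equation. -/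
def mdeSol {N : ℕ} (𝒜 : Matrix (Fin N) (Fin N) ℂ) (zhat : ℂ) :
    Matrix (Fin N ⊕ Fin N) (Fin N ⊕ Fin N) ℂ :=
  Classical.epsilon fun M => IsMDESolution 𝒜 zhat M

/-- Partial derivative in the real direction. -/
def pdx (F : ℂ → ℝ) (z : ℂ) : ℝ := deriv (fun s : ℝ => F (z + (s : ℂ))) 0

/-- Partial derivative in the imaginary direction. -/
def pdy (F : ℂ → ℝ) (z : ℂ) : ℝ := deriv (fun s : ℝ => F (z + (s : ℂ) * Complex.I)) 0

/-- The Laplacian `Δ = ∂²/∂x² + ∂²/∂y²` on `ℂ ≅ ℝ²`. -/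
def cLap (F : ℂ → ℝ) (z : ℂ) : ℝ := pdx (pdx F) z + pdy (pdy F) z

/-- Partial derivative in the real direction, complex-valued version. -/
def pdxC (F : ℂ → ℂ) (z : ℂ) : ℂ := deriv (fun s : ℝ => F (z + (s : ℂ))) 0

/-- Partial derivative in the imaginary direction, complex-valued version. -/
def pdyC (F : ℂ → ℂ) (z : ℂ) : ℂ := deriv (fun s : ℝ => F (z + (s : ℂ) * Complex.I)) 0

/-- The Laplacian on `ℂ`, complex-valued version. -/
def cLapC (F : ℂ → ℂ) (z : ℂ) : ℂ := pdxC (pdxC F) z + pdyC (pdyC F) z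

/-- Wirtinger derivative `∂_z = (∂_x - i ∂_y)/2`. -/
def wirtDz (F : ℂ → ℂ) (z : ℂ) : ℂ := (pdxC F z - Complex.I * pdyC F z) / 2

/-- Wirtinger derivative `∂_z̄ = (∂_x + i ∂_y)/2`. -/
def wirtDzBar (F : ℂ → ℂ) (z : ℂ) : ℂ := (pdxC F z + Complex.I * pdyC F z) / 2

/-- Laplacian in the `j`-th coordinate of a function of `k` complex variables. -/
def lapCoord {k : ℕ} (j : Fin k) (F : (Fin k → ℂ) → ℂ) (w : Fin k → ℂ) : ℂ :=
  cLapC (fun z => F (Function.update w j z)) (w j)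

/-- The composition `Δ_{w₁} ⋯ Δ_{w_k}` of the coordinatewise Laplacians. -/
def multiLap {k : ℕ} (F : (Fin k → ℂ) → ℂ) : (Fin k → ℂ) → ℂ :=
  (List.finRange k).foldr (fun j G => lapCoord j G) F

/-- Resolvent of the Hermitization of `Y` at the spectral parameter `iη`. -/
def resolv {N : ℕ} (Y : Matrix (Fin N) (Fin N) ℂ) (η : ℝ) :
    Matrix (Fin N ⊕ Fin N) (Fin N ⊕ Fin N) ℂ :=
  (hermitize Y - ((η : ℂ) * Complex.I) • 1)⁻¹

/-- `X` is an IID random matrix (real if `isReal`, complex if not) with moment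
constants `cp`. -/
def IsIIDEntries {N : ℕ} {Ω : Type} [MeasurableSpace Ω] (μ : Measure Ω)
    (X : Ω → Matrix (Fin N) (Fin N) ℂ) (cp : ℕ → ℝ) (isReal : Bool) : Prop :=
  (∀ i j, Measurable fun ω => X ω i j) ∧
  iIndepFun (m := fun _ : Fin N × Fin N => (inferInstance : MeasurableSpace ℂ))
    (fun p : Fin N × Fin N => fun ω => X ω p.1 p.2) μ ∧
  (∀ i j, ∫ ω, X ω i j ∂μ = 0) ∧
  (∀ i j, ∫ ω, (‖X ω i j‖) ^ 2 ∂μ = 1 / N) ∧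
  (if isReal then ∀ ω i j, (X ω i j).im = 0
    else ∀ i j, ∫ ω, (X ω i j) ^ 2 ∂μ = 0) ∧
  (∀ p : ℕ, ∀ i j, ∫ ω, (Real.sqrt N * ‖X ω i j‖) ^ p ∂μ ≤ cp p)

/-- The law of a centered complex Gaussian whose real and imaginary parts are
independent real Gaussians of variance `v`. -/
def complexGaussian (v : ℝ≥0) : Measure ℂ :=
  Measure.map (fun p : ℝ × ℝ => (p.1 : ℂ) + (p.2 : ℂ) * Complex.I)
    ((gaussianReal 0 v).prod (gaussianReal 0 v))

/-- `X` is a Ginibre random matrix (real if `isReal`, complex if not). -/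
def IsGinibre {N : ℕ} {Ω : Type} [MeasurableSpace Ω] (μ : Measure Ω)
    (X : Ω → Matrix (Fin N) (Fin N) ℂ) (isReal : Bool) : Prop :=
  (∀ i j, Measurable fun ω => X ω i j) ∧
  iIndepFun (m := fun _ : Fin N × Fin N => (inferInstance : MeasurableSpace ℂ))
    (fun p : Fin N × Fin N => fun ω => X ω p.1 p.2) μ ∧
  (∀ i j, Measure.map (fun ω => X ω i j) μ =
    if isReal then Measure.map (fun x : ℝ => (x : ℂ)) (gaussianReal 0 (N : ℝ≥0)⁻¹)
    else complexGaussian ((2 * N : ℝ≥0))⁻¹)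

/-- The domain `D_C` of regular sharp-edge candidates. -/
def edgeDomain {N : ℕ} (A : Matrix (Fin N) (Fin N) ℂ) (C : ℝ) : Set ℂ :=
  {z | IsUnit (A - z • 1).det ∧ opNorm ((A - z • 1)⁻¹) < C ∧
    1 / C < (1 + ‖z‖) ^ 3 *
      ‖ntrace ((absSq (A - z • 1))⁻¹ * (absSq (A - z • 1))⁻¹ * (A - z • 1))‖}

/-- `I₃ = ⟨|B|⁻⁴ B*⟩`. -/
def I3m {N : ℕ} (B : Matrix (Fin N) (Fin N) ℂ) : ℂ :=
  ntrace ((absSq B)⁻¹ * (absSq B)⁻¹ * Bᴴ)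

/-- `I₄ = ⟨|B|⁻⁴⟩`. -/
def I4m {N : ℕ} (B : Matrix (Fin N) (Fin N) ℂ) : ℂ :=
  ntrace ((absSq B)⁻¹ * (absSq B)⁻¹)

/-- The rescaling parameter `γ₀ = -I₄^{-1/2} I₃`. -/
def gamma0 {N : ℕ} (B : Matrix (Fin N) (Fin N) ℂ) : ℂ :=
  -((((I4m B).re ^ (-(1/2 : ℝ)) : ℝ) : ℂ) * I3m B)

/-- The rescaling parameter `c₀ = I₄^{-1/4}`. -/
def cScale {N : ℕ} (B : Matrix (Fin N) (Fin N) ℂ) : ℝ :=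
  (I4m B).re ^ (-(1/4 : ℝ))

/-- The sharp-edge assumption (Assumption 2.5 of the paper) for the pair `(A, z₀)`
over the field `𝔽` (`isReal = true` for `𝔽 = ℝ`). -/
def SharpEdge {N : ℕ} (A : Matrix (Fin N) (Fin N) ℂ) (z₀ : ℂ)
    (C₁ C₂ 𝔠 : ℝ) (isReal : Bool) : Prop :=
  ntrace ((absSq (A - z₀ • 1))⁻¹) = 1 ∧ z₀ ∈ edgeDomain A C₁ ∧
  (if isReal then
    ((((N : ℝ) ^ (-(1/2 : ℝ) + 𝔠) ≤ |z₀.im|) →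
        ¬ Bornology.IsBounded
          (connectedComponentIn (edgeDomain A C₂ ∩ {z : ℂ | z.im ≠ 0}) z₀)) ∧
     ((|z₀.im| ≤ (N : ℝ) ^ (-(1/2 : ℝ) + 𝔠)) →
        ¬ Bornology.IsBounded
          (connectedComponentIn {x : ℝ | (x : ℂ) ∈ edgeDomain A C₂} z₀.re)))
  else
    ¬ Bornology.IsBounded (connectedComponentIn (edgeDomain A C₂) z₀))

/-- The eigenvalues of `B`, with algebraic multiplicity, as a list. -/
def eigList {N : ℕ} (B : Matrix (Fin N) (Fin N) ℂ) : List ℂ :=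
  (Matrix.charpoly B).roots.toList

/-- The sum of `F(φ(σ_{i₁}), …, φ(σ_{i_k}))` over all `k`-tuples of pairwise
distinct indices, where `σ₁, …, σ_N` are the eigenvalues of `B` with multiplicity. -/
def kPointSum {k N : ℕ} (F : (Fin k → ℂ) → ℂ) (φ : ℂ → ℂ)
    (B : Matrix (Fin N) (Fin N) ℂ) : ℂ :=
  ∑ f ∈ Finset.univ.filter (fun f : Fin k → Fin N => Function.Injective f),
    F fun j => φ ((eigList B).getD ((f j : ℕ)) 0)

/-- The regularized log-determinant statistic
`2N ∫_η^∞ Im[⟨(H_Y - iu)⁻¹⟩ - ⟨M_𝒜(iu)⟩] du`. -/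
def Lstat {N : ℕ} (Y 𝒜 : Matrix (Fin N) (Fin N) ℂ) (η : ℝ) : ℝ :=
  2 * N * ∫ u in Set.Ioi η,
    ((ntrace (resolv Y u)).im - (ntrace (mdeSol 𝒜 ((u : ℂ) * Complex.I))).im)

/-- The regularized smallest-singular-value statistic `⟨η(|Y|² + η²)⁻¹⟩`. -/
def Nstat {N : ℕ} (Y : Matrix (Fin N) (Fin N) ℂ) (η : ℝ) : ℝ :=
  (ntrace ((η : ℂ) • (absSq Y + ((η : ℂ) ^ 2) • 1)⁻¹)).re

/-- The path assumption (Assumption 4.4 of the paper) with constant `C₅`: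
a piecewise `C¹` path of deformations keeping the origin a sharp edge. -/
def PathAssumption {N : ℕ} (𝒜 : ℝ → Matrix (Fin N) (Fin N) ℂ)
    (A₀ : Matrix (Fin N) (Fin N) ℂ) (z₁ : ℂ) (C₅ : ℝ) : Prop :=
  (∀ i j, ContinuousOn (fun t => 𝒜 t i j) (Set.Icc 0 1)) ∧
  𝒜 0 = A₀ ∧ 𝒜 1 = (-z₁) • 1 ∧ ‖z₁‖ = 1 ∧
  (∀ t ∈ Set.Icc (0 : ℝ) 1, ntrace ((absSq (𝒜 t))⁻¹) = 1) ∧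
  ∃ T : Finset ℝ, ∀ t ∈ Set.Icc (0 : ℝ) 1, t ∉ T →
    (∀ i j, DifferentiableAt ℝ (fun s => 𝒜 s i j) t) ∧
    IsUnit (𝒜 t).det ∧
    opNorm (𝒜 t) ≤ C₅ ∧ opNorm ((𝒜 t)⁻¹) ≤ C₅ ∧
    C₅⁻¹ ≤ ‖ntrace (𝒜 t * ((absSq (𝒜 t))⁻¹ * (absSq (𝒜 t))⁻¹))‖ ∧
    ‖ntrace (𝒜 t * ((absSq (𝒜 t))⁻¹ * (absSq (𝒜 t))⁻¹))‖ ≤ C₅ ∧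
    opNorm (Matrix.of fun i j => deriv (fun s => 𝒜 s i j) t) ≤ C₅ * Real.log N

/-- `θ_t = 1 - ⟨(𝒜_t 𝒜_tᵀ)⁻¹⟩` along a path of deformations. -/
def thetaPath {N : ℕ} (𝒜 : ℝ → Matrix (Fin N) (Fin N) ℂ) (t : ℝ) : ℂ :=
  1 - ntrace ((𝒜 t * (𝒜 t)ᵀ)⁻¹)

/-- `ζ(w) = z₀ + γ₀⁻¹ N^{-1/2} w`. -/
def zetaPt {N : ℕ} (A : Matrix (Fin N) (Fin N) ℂ) (z₀ : ℂ) (w : ℂ) : ℂ :=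
  z₀ + (gamma0 (A - z₀ • 1))⁻¹ * ((((Real.sqrt (N : ℝ))⁻¹ : ℝ)) : ℂ) * w

/-- `η₁ = N^{-3/4-δ}`. -/
def eta1 (N : ℕ) (δ : ℝ) : ℝ := (N : ℝ) ^ (-(3/4 : ℝ) - δ)

/-- `η₀ = c₀⁻¹ η₁`. -/
def eta0 {N : ℕ} (A : Matrix (Fin N) (Fin N) ℂ) (z₀ : ℂ) (δ : ℝ) : ℝ :=
  (cScale (A - z₀ • 1))⁻¹ * eta1 N δ

/-- The regularized log-determinant `L₀(w)` for the realization `Xm` of the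
IID matrix, i.e. `Tr log(|A+Xm-ζ(w)|²+η₀²)` minus its deterministic counterpart,
written via the integral representation of the resolvent trace. -/
def L0stat {N : ℕ} (A Xm : Matrix (Fin N) (Fin N) ℂ) (z₀ : ℂ) (δ : ℝ) (w : ℂ) : ℝ :=
  Lstat (A + Xm - zetaPt A z₀ w • 1) (A - zetaPt A z₀ w • 1) (eta0 A z₀ δ)

/-- The regularized log-determinant `L₁^{Gin}(w)` for the realization `Xm`
of the Ginibre matrix. -/
def L1stat {N : ℕ} (Xm : Matrix (Fin N) (Fin N) ℂ) (z₁ : ℂ) (δ : ℝ) (w : ℂ) : ℝ :=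
  Lstat (Xm - (z₁ + z₁ * ((((Real.sqrt (N : ℝ))⁻¹ : ℝ)) : ℂ) * w) • 1)
    ((-(z₁ + z₁ * ((((Real.sqrt (N : ℝ))⁻¹ : ℝ)) : ℂ) * w)) • 1) (eta1 N δ)

/-- The regularized smallest-singular-value statistic
`N₀(w) = c₀⁻¹ ⟨η₀ (|A+Xm-ζ(w)|²+η₀²)⁻¹⟩`. -/
def N0stat {N : ℕ} (A Xm : Matrix (Fin N) (Fin N) ℂ) (z₀ : ℂ) (δ : ℝ) (w : ℂ) : ℝ :=
  (cScale (A - z₀ • 1))⁻¹ * Nstat (A + Xm - zetaPt A z₀ w • 1) (eta0 A z₀ δ)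

/-- The regularized smallest-singular-value statistic
`N₁^{Gin}(w) = ⟨η₁ (|Xm-z₁-z₁N^{-1/2}w|²+η₁²)⁻¹⟩`. -/
def N1stat {N : ℕ} (Xm : Matrix (Fin N) (Fin N) ℂ) (z₁ : ℂ) (δ : ℝ) (w : ℂ) : ℝ :=
  Nstat (Xm - (z₁ + z₁ * ((((Real.sqrt (N : ℝ))⁻¹ : ℝ)) : ℂ) * w) • 1) (eta1 N δ)


section LogdetAux
open Set Filter


lemma scalar_hasDeriv (a b : ℝ) {u : ℝ} (hu : 0 < u) :
    HasDerivAt (fun u : ℝ => (1/2) * (Real.log (a^2+u^2) - Real.log (b^2+u^2)))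
      (u/(a^2+u^2) - u/(b^2+u^2)) u := by
  have ha : (0:ℝ) < a^2 + u^2 := by positivity
  have hb : (0:ℝ) < b^2 + u^2 := by positivity
  have h1 : HasDerivAt (fun u : ℝ => a^2+u^2) (2*u) u := by
    simpa using (hasDerivAt_pow 2 u).const_add (a^2)
  have h2 : HasDerivAt (fun u : ℝ => b^2+u^2) (2*u) u := by
    simpa using (hasDerivAt_pow 2 u).const_add (b^2)
  have := ((h1.log ha.ne').sub (h2.log hb.ne')).const_mul (1/2 : ℝ)
  refine this.congr_deriv ?_
  ring

lemma scalar_tendsto (a b : ℝ) :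
    Tendsto (fun u : ℝ => (1/2) * (Real.log (a^2+u^2) - Real.log (b^2+u^2))) atTop (nhds 0) := by
  have hratio : Tendsto (fun u : ℝ => (a^2+u^2)/(b^2+u^2)) atTop (nhds 1) := by
    have hb : Tendsto (fun u : ℝ => b^2 + u^2) atTop atTop :=
      tendsto_atTop_add_const_left _ _ (tendsto_pow_atTop two_ne_zero)
    have h0 : Tendsto (fun u : ℝ => (a^2-b^2)/(b^2+u^2)) atTop (nhds 0) :=
      Tendsto.div_atTop tendsto_const_nhds hb
    have : Tendsto (fun u : ℝ => 1 + (a^2-b^2)/(b^2+u^2)) atTop (nhds (1+0)) :=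
      tendsto_const_nhds.add h0
    rw [add_zero] at this
    refine this.congr' ?_
    filter_upwards [eventually_gt_atTop 0] with u hu
    have hbu : (0:ℝ) < b^2+u^2 := by positivity
    field_simp
    ring
  have := (hratio.log one_ne_zero)
  rw [Real.log_one] at this
  have heq : ∀ᶠ u : ℝ in atTop, Real.log ((a^2+u^2)/(b^2+u^2))
      = Real.log (a^2+u^2) - Real.log (b^2+u^2) := by
    filter_upwards [eventually_gt_atTop 0] with u hu
    have ha : (0:ℝ) < a^2+u^2 := by positivity
    have hb : (0:ℝ) < b^2+u^2 := by positivity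
    exact Real.log_div ha.ne' hb.ne'
  have h2 := (this.congr' heq).const_mul (1/2 : ℝ)
  simpa using h2

lemma scalar_integrable (a b η : ℝ) (hη : 0 < η) :
    IntegrableOn (fun u : ℝ => u/(a^2+u^2) - u/(b^2+u^2)) (Ioi η) := by
  have hmeas : ContinuousOn (fun u : ℝ => u/(a^2+u^2) - u/(b^2+u^2)) (Ioi η) := by
    apply ContinuousOn.sub <;>
    · apply ContinuousOn.div continuousOn_id (by fun_prop) ?_
      intro x hx
      have hx0 : 0 < x := hη.trans hx
      positivity
  have hint : IntegrableOn (fun u : ℝ => (a^2+b^2) * u ^ (-3 : ℝ)) (Ioi η) :=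
    (integrableOn_Ioi_rpow_of_lt (by norm_num) hη).const_mul _
  refine Integrable.mono' hint (hmeas.aestronglyMeasurable measurableSet_Ioi) ?_
  filter_upwards [ae_restrict_mem measurableSet_Ioi] with u hu
  have hu0 : 0 < u := hη.trans hu
  have ha : (0:ℝ) < a^2+u^2 := by positivity
  have hb : (0:ℝ) < b^2+u^2 := by positivity
  have key : u/(a^2+u^2) - u/(b^2+u^2) = u*(b^2-a^2)/((a^2+u^2)*(b^2+u^2)) := by
    field_simp; ring
  rw [key, Real.rpow_neg hu0.le, Real.norm_eq_abs]
  rw [abs_div, abs_mul, abs_of_pos hu0, abs_of_pos (mul_pos ha hb)]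
  have h1 : u * |b^2-a^2| ≤ u * (a^2+b^2) := by
    apply mul_le_mul_of_nonneg_left _ hu0.le
    rw [abs_sub_le_iff]; constructor <;> nlinarith [sq_nonneg a, sq_nonneg b]
  have h2 : u^2 * u^2 ≤ (a^2+u^2)*(b^2+u^2) := by nlinarith [sq_nonneg a, sq_nonneg b, sq_nonneg u]
  calc u * |b^2-a^2| / ((a^2+u^2)*(b^2+u^2)) ≤ u * (a^2+b^2) / (u^2*u^2) := by
        apply div_le_div₀ (by positivity) h1 (by positivity) h2
    _ = (a^2+b^2) * (u ^ (3:ℝ))⁻¹ := by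
        rw [show ((3:ℝ)) = ((3:ℕ):ℝ) by norm_num, Real.rpow_natCast]
        field_simp

lemma scalar_integral (a b η : ℝ) (hη : 0 < η) :
    ∫ u in Ioi η, (u/(a^2+u^2) - u/(b^2+u^2))
      = (1/2) * (Real.log (b^2+η^2) - Real.log (a^2+η^2)) := by
  have := integral_Ioi_of_hasDerivAt_of_tendsto'
    (f := fun u : ℝ => (1/2) * (Real.log (a^2+u^2) - Real.log (b^2+u^2)))
    (fun x hx => scalar_hasDeriv a b (hη.trans_le hx))
    (scalar_integrable a b η hη) (scalar_tendsto a b)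
  rw [this]; ring


lemma im_inv_eq' (l u : ℝ) :
    (((l:ℂ) - (u:ℂ) * Complex.I)⁻¹).im = u / (l^2 + u^2) := by
  have h : Complex.normSq ((l:ℂ) - (u:ℂ) * Complex.I) = l^2 + u^2 := by
    simp [Complex.normSq_apply]; ring
  rw [Complex.inv_im, h]
  simp

section MatAux

variable {d : ℕ} {H : Matrix (Fin d) (Fin d) ℂ} (h : H.IsHermitian)

lemma conj_diag (f : Fin d → ℂ) :
    (h.eigenvectorUnitary : Matrix (Fin d) (Fin d) ℂ) * diagonal f *
      star (h.eigenvectorUnitary : Matrix (Fin d) (Fin d) ℂ) *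
    ((h.eigenvectorUnitary : Matrix (Fin d) (Fin d) ℂ) * diagonal (fun i => (f i)⁻¹) *
      star (h.eigenvectorUnitary : Matrix (Fin d) (Fin d) ℂ)) =
    (h.eigenvectorUnitary : Matrix (Fin d) (Fin d) ℂ) * diagonal (fun i => f i * (f i)⁻¹) *
      star (h.eigenvectorUnitary : Matrix (Fin d) (Fin d) ℂ) := by
  have hU : star (h.eigenvectorUnitary : Matrix (Fin d) (Fin d) ℂ) *
      (h.eigenvectorUnitary : Matrix (Fin d) (Fin d) ℂ) = 1 :=
    Matrix.mem_unitaryGroup_iff'.mp h.eigenvectorUnitary.2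
  rw [show ∀ A B C D E : Matrix (Fin d) (Fin d) ℂ, A * B * C * (A * D * E) = A * (B * ((C * A) * D)) * E
    from fun A B C D E => by noncomm_ring, hU, one_mul, diagonal_mul_diagonal]

lemma resolv_eq (u : ℝ) (hu : u ≠ 0) :
    (H - ((u:ℂ) * Complex.I) • 1)⁻¹ =
      (h.eigenvectorUnitary : Matrix (Fin d) (Fin d) ℂ) *
        diagonal (fun i => ((h.eigenvalues i : ℂ) - (u:ℂ) * Complex.I)⁻¹) *
        star (h.eigenvectorUnitary : Matrix (Fin d) (Fin d) ℂ) := by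
  set U : Matrix (Fin d) (Fin d) ℂ := (h.eigenvectorUnitary : Matrix (Fin d) (Fin d) ℂ) with hUdef
  have hU : U * star U = 1 := Matrix.mem_unitaryGroup_iff.mp h.eigenvectorUnitary.2
  have hne : ∀ i, (h.eigenvalues i : ℂ) - (u:ℂ) * Complex.I ≠ 0 := by
    intro i hc
    have := congrArg Complex.im hc
    simp at this
    exact hu this
  have hdecomp : H - ((u:ℂ) * Complex.I) • 1 =
      U * diagonal (fun i => (h.eigenvalues i : ℂ) - (u:ℂ) * Complex.I) * star U := by
    conv_lhs => rw [h.spectral_theorem]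
    rw [Unitary.conjStarAlgAut_apply, ← hUdef]
    have h1 : ((u:ℂ) * Complex.I) • (1 : Matrix (Fin d) (Fin d) ℂ) =
        U * (((u:ℂ) * Complex.I) • (1 : Matrix (Fin d) (Fin d) ℂ)) * star U := by
      rw [mul_smul_comm, mul_one, smul_mul_assoc, hU]
    rw [h1, ← sub_mul, ← mul_sub, smul_one_eq_diagonal, diagonal_sub]
    rfl
  rw [hdecomp]
  apply Matrix.inv_eq_right_inv
  rw [conj_diag]
  have : (fun i => ((h.eigenvalues i : ℂ) - (u:ℂ) * Complex.I) *
      ((h.eigenvalues i : ℂ) - (u:ℂ) * Complex.I)⁻¹) = fun _ => (1:ℂ) := by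
    funext i; exact mul_inv_cancel₀ (hne i)
  rw [this, diagonal_one, mul_one, hU]

lemma trace_resolv (u : ℝ) (hu : u ≠ 0) :
    ((H - ((u:ℂ) * Complex.I) • 1)⁻¹).trace =
      ∑ i, ((h.eigenvalues i : ℂ) - (u:ℂ) * Complex.I)⁻¹ := by
  rw [resolv_eq h u hu, trace_mul_comm, ← mul_assoc,
    Matrix.mem_unitaryGroup_iff'.mp h.eigenvectorUnitary.2, one_mul, trace_diagonal]

lemma det_form (η : ℝ) :
    (H * H + ((η:ℂ)^2) • 1).det = ((∏ i, (h.eigenvalues i ^ 2 + η ^ 2) : ℝ) : ℂ) := by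
  set U : Matrix (Fin d) (Fin d) ℂ := (h.eigenvectorUnitary : Matrix (Fin d) (Fin d) ℂ) with hUdef
  have hU : U * star U = 1 := Matrix.mem_unitaryGroup_iff.mp h.eigenvectorUnitary.2
  have hU' : star U * U = 1 := Matrix.mem_unitaryGroup_iff'.mp h.eigenvectorUnitary.2
  have hdecomp : H * H + ((η:ℂ)^2) • 1 =
      U * diagonal (fun i => (h.eigenvalues i : ℂ)^2 + (η:ℂ)^2) * star U := by
    conv_lhs => rw [h.spectral_theorem]
    rw [Unitary.conjStarAlgAut_apply, ← hUdef]
    have h1 : ((η:ℂ)^2) • (1 : Matrix (Fin d) (Fin d) ℂ) =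
        U * (((η:ℂ)^2) • (1 : Matrix (Fin d) (Fin d) ℂ)) * star U := by
      rw [mul_smul_comm, mul_one, smul_mul_assoc, hU]
    rw [h1]
    rw [show ∀ A B C : Matrix (Fin d) (Fin d) ℂ, (U * A * star U) * (U * B * star U) + U * C * star U
       = U * (A * ((star U * U) * B) + C) * star U from fun A B C => by noncomm_ring, hU',
       one_mul, diagonal_mul_diagonal, smul_one_eq_diagonal, diagonal_add]
    congr 1
    funext i
    simp [Function.comp]
    simp only [pow_two, add_comm]
  rw [hdecomp, det_mul, det_mul, mul_comm, ← mul_assoc, ← det_mul, hU', det_one, one_mul,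
    det_diagonal]
  push_cast
  ring_nf

end MatAux
end LogdetAux

/-- **Integral representation of differences of regularized log-determinants.** -/
theorem logdet_integral_representation (d : ℕ) (hd : 1 ≤ d)
    (H₁ H₂ : Matrix (Fin d) (Fin d) ℂ) (h₁ : H₁.IsHermitian) (h₂ : H₂.IsHermitian)
    (η : ℝ) (hη : 0 < η) :
    IntegrableOn (fun u : ℝ =>
        (((H₁ - ((u : ℂ) * Complex.I) • 1)⁻¹).trace).im
          - (((H₂ - ((u : ℂ) * Complex.I) • 1)⁻¹).trace).im) (Set.Ici η) ∧
    Real.log ((H₁ * H₁ + ((η : ℂ) ^ 2) • 1).det.re)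
        - Real.log ((H₂ * H₂ + ((η : ℂ) ^ 2) • 1).det.re)
      = -2 * ∫ u in Set.Ici η,
          ((((H₁ - ((u : ℂ) * Complex.I) • 1)⁻¹).trace).im
            - (((H₂ - ((u : ℂ) * Complex.I) • 1)⁻¹).trace).im) := by

  set a := h₁.eigenvalues with ha
  set b := h₂.eigenvalues with hb
  have key : ∀ u : ℝ, u ∈ Set.Ioi η →
      (((H₁ - ((u : ℂ) * Complex.I) • 1)⁻¹).trace).im
        - (((H₂ - ((u : ℂ) * Complex.I) • 1)⁻¹).trace).im
      = ∑ i, (u / (a i ^ 2 + u ^ 2) - u / (b i ^ 2 + u ^ 2)) := by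
    intro u hu
    have hu0 : u ≠ 0 := (hη.trans hu).ne'
    rw [trace_resolv h₁ u hu0, trace_resolv h₂ u hu0, Complex.im_sum, Complex.im_sum,
      ← Finset.sum_sub_distrib]
    exact Finset.sum_congr rfl fun i _ => by rw [im_inv_eq', im_inv_eq']
  have hsum : IntegrableOn
      (fun u : ℝ => ∑ i, (u / (a i ^ 2 + u ^ 2) - u / (b i ^ 2 + u ^ 2))) (Set.Ioi η) :=
    integrable_finset_sum _ fun i _ => scalar_integrable (a i) (b i) η hη
  have hint : IntegrableOn (fun u : ℝ =>
      (((H₁ - ((u : ℂ) * Complex.I) • 1)⁻¹).trace).im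
        - (((H₂ - ((u : ℂ) * Complex.I) • 1)⁻¹).trace).im) (Set.Ioi η) :=
    hsum.congr_fun (fun u hu => (key u hu).symm) measurableSet_Ioi
  refine ⟨(integrableOn_Ici_iff_integrableOn_Ioi).mpr hint, ?_⟩
  rw [MeasureTheory.integral_Ici_eq_integral_Ioi,
    MeasureTheory.setIntegral_congr_fun measurableSet_Ioi key,
    MeasureTheory.integral_finset_sum _ (fun i _ => scalar_integrable (a i) (b i) η hη)]
  have hdet₁ := det_form h₁ η
  have hdet₂ := det_form h₂ η
  rw [hdet₁, hdet₂, Complex.ofReal_re, Complex.ofReal_re,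
    Real.log_prod (fun i _ => by positivity),
    Real.log_prod (fun i _ => by positivity)]
  rw [Finset.mul_sum, ← Finset.sum_sub_distrib]
  refine Finset.sum_congr rfl fun i _ => ?_
  rw [scalar_integral (a i) (b i) η hη]
  ring
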